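/- Let K be a compact Hausdorff topological group and ψ : K → K a continuous endomorphism. Let Im_∞ψ = ⋂_{n∈ℕ} ψ^n(K) be the hyperimage of ψ, a closed ψ-invariant subgroup of K. Then ψ(Im_∞ψ) = Im_∞ψ (i.e. the restriction of ψ to Im_∞ψ is surjective), Im_∞ψ is the largest closed ψ-invariant subgroup N of K with ψ(N) = N, and the topological entropies satisfy h_top(ψ) = h_top(ψ↾_{Im_∞ψ}). -/

import Mathlib

set_option linter.unusedSectionVars false
set_option maxHeartbeats 1000000

section TopEnt

variable {X : Type*} [TopologicalSpace X]

/-- `U` is an open cover of `X`. -/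
def IsOpenCover (U : Set (Set X)) : Prop := (∀ u ∈ U, IsOpen u) ∧ ⋃₀ U = Set.univ

/-- `N(U)`: the minimal cardinality of a (finite) subcover of `U`. -/
noncomputable def coverCard (U : Set (Set X)) : ℕ :=
  sInf {n : ℕ | ∃ V : Finset (Set X), ↑V ⊆ U ∧ ⋃₀ (V : Set (Set X)) = Set.univ ∧ V.card = n}

/-- The join `U ∨ V = {u ∩ v : u ∈ U, v ∈ V}` of two covers. -/
def joinCov (U V : Set (Set X)) : Set (Set X) := Set.image2 (· ∩ ·) U V

/-- The preimage cover `T⁻¹(U)`. -/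
def pullCov (T : X → X) (U : Set (Set X)) : Set (Set X) := (Set.preimage T) '' U

/-- `iterJoin T U n = U ∨ T⁻¹(U) ∨ ⋯ ∨ T^{-n}(U)`. -/
def iterJoin (T : X → X) (U : Set (Set X)) : ℕ → Set (Set X)
  | 0 => U
  | n + 1 => joinCov (iterJoin T U n) (pullCov (T^[n + 1]) U)

/-- The topological entropy of `T` with respect to the open cover `U`:
`H_top(T,U) = lim_n log N(U ∨ T⁻¹U ∨ ⋯ ∨ T^{-n+1}U)/n`. -/
noncomputable def topEntOf (T : X → X) (U : Set (Set X)) : ENNReal :=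
  Filter.atTop.limsup fun n : ℕ =>
    ENNReal.ofReal (Real.log (coverCard (iterJoin T U n)) / (n + 1))

/-- The Adler–Konheim–McAndrew topological entropy of `T : X → X`. -/
noncomputable def topEnt (T : X → X) : ENNReal :=
  ⨆ (U : Set (Set X)) (_ : IsOpenCover U), topEntOf T U

end TopEnt

/-- The hyperimage `Im_∞ψ = ⋂_{n∈ℕ} ψ^n(K)`. -/
def hyperIm {K : Type*} (ψ : K → K) : Set K := ⋂ n : ℕ, Set.range ψ^[n]



section Lemmas
variable {X : Type*} [TopologicalSpace X]

/-- The set of achievable subcover cardinalities. -/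
def covSet (U : Set (Set X)) : Set ℕ :=
  {n : ℕ | ∃ V : Finset (Set X), ↑V ⊆ U ∧ ⋃₀ (V : Set (Set X)) = Set.univ ∧ V.card = n}

lemma coverCard_eq : ∀ U : Set (Set X), coverCard U = sInf (covSet U) := fun _ => rfl

def HasFin (U : Set (Set X)) : Prop := (covSet U).Nonempty

lemma isOpenCover_join {U V : Set (Set X)} (hU : IsOpenCover U) (hV : IsOpenCover V) :
    IsOpenCover (joinCov U V) := by
  constructor
  · rintro w ⟨u, hu, v, hv, rfl⟩
    exact (hU.1 u hu).inter (hV.1 v hv)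
  · apply Set.eq_univ_of_forall
    intro x
    have hx1 : x ∈ ⋃₀ U := by rw [hU.2]; trivial
    have hx2 : x ∈ ⋃₀ V := by rw [hV.2]; trivial
    obtain ⟨u, hu, hxu⟩ := hx1
    obtain ⟨v, hv, hxv⟩ := hx2
    exact ⟨u ∩ v, ⟨u, hu, v, hv, rfl⟩, hxu, hxv⟩

lemma isOpenCover_pull {T : X → X} (hT : Continuous T) {U : Set (Set X)}
    (hU : IsOpenCover U) : IsOpenCover (pullCov T U) := by
  constructor
  · rintro w ⟨u, hu, rfl⟩
    exact (hU.1 u hu).preimage hT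
  · apply Set.eq_univ_of_forall
    intro x
    have hx1 : T x ∈ ⋃₀ U := by rw [hU.2]; trivial
    obtain ⟨u, hu, hxu⟩ := hx1
    exact ⟨T ⁻¹' u, ⟨u, hu, rfl⟩, hxu⟩

lemma isOpenCover_iterJoin {T : X → X} (hT : Continuous T) {U : Set (Set X)}
    (hU : IsOpenCover U) : ∀ n, IsOpenCover (iterJoin T U n)
  | 0 => hU
  | n + 1 => isOpenCover_join (isOpenCover_iterJoin hT hU n)
      (isOpenCover_pull (hT.iterate (n+1)) hU)

lemma hasFin_of_isOpenCover [CompactSpace X] {U : Set (Set X)} (hU : IsOpenCover U) :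
    HasFin U := by
  classical
  have : Set.univ ⊆ ⋃ u : U, (u : Set X) := by
    rw [← Set.sUnion_eq_iUnion, hU.2]
  obtain ⟨t, ht⟩ := isCompact_univ.elim_finite_subcover (fun u : U => (u : Set X))
    (fun u => hU.1 u u.2) this
  refine ⟨(t.image (Subtype.val)).card, t.image Subtype.val, ?_, ?_, rfl⟩
  · intro s hs
    simp only [Finset.coe_image] at hs
    obtain ⟨u, _, rfl⟩ := hs
    exact u.2
  · apply Set.eq_univ_of_forall
    intro x
    have := ht (Set.mem_univ x)
    simp only [Set.mem_iUnion] at this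
    obtain ⟨u, hu, hxu⟩ := this
    refine ⟨u, ?_, hxu⟩
    simp only [Finset.coe_image, Finset.mem_coe, Set.mem_image]
    exact ⟨u, hu, rfl⟩

lemma coverCard_mem {U : Set (Set X)} (h : HasFin U) : coverCard U ∈ covSet U :=
  Nat.sInf_mem h

lemma one_le_coverCard [Nonempty X] {U : Set (Set X)} (h : HasFin U) : 1 ≤ coverCard U := by
  obtain ⟨V, _, hVc, hcard⟩ := coverCard_mem h
  rcases Nat.eq_zero_or_pos (coverCard U) with h0 | h1
  · exfalso
    rw [h0, Finset.card_eq_zero] at hcard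
    subst hcard
    simp at hVc
    exact (Set.univ_nonempty (α := X)).ne_empty hVc.symm
  · exact h1

/-- Refinement lemma: if every nonempty element of `V` is contained in some element of `U`,
then `coverCard U ≤ coverCard V`. -/
lemma coverCard_le_of_refines {U V : Set (Set X)} (hV : HasFin V)
    (h : ∀ v ∈ V, v.Nonempty → ∃ u ∈ U, v ⊆ u) : coverCard U ≤ coverCard V := by
  classical
  obtain ⟨F, hFV, hFc, hFcard⟩ := coverCard_mem hV
  set F' := F.filter (fun v => v.Nonempty) with hF'
  have key : ∀ v ∈ F', ∃ u ∈ U, v ⊆ u := by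
    intro v hv
    rw [hF', Finset.mem_filter] at hv
    exact h v (hFV hv.1) hv.2
  choose g hgU hgsub using key
  set G := F'.attach.image (fun v => g v.1 v.2) with hG
  have hGU : ↑G ⊆ U := by
    intro u hu
    simp only [hG, Finset.coe_image, Finset.mem_coe] at hu
    obtain ⟨v, _, rfl⟩ := hu
    exact hgU _ _
  have hGc : ⋃₀ (G : Set (Set X)) = Set.univ := by
    apply Set.eq_univ_of_forall
    intro x
    have : x ∈ ⋃₀ (F : Set (Set X)) := by rw [hFc]; trivial
    obtain ⟨v, hvF, hxv⟩ := this
    have hvF' : v ∈ F' := by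
      rw [hF', Finset.mem_filter]
      exact ⟨hvF, ⟨x, hxv⟩⟩
    refine ⟨g v hvF', ?_, hgsub v hvF' hxv⟩
    simp only [hG, Finset.coe_image, Finset.mem_coe]
    exact ⟨⟨v, hvF'⟩, Finset.mem_attach _ _, rfl⟩
  calc coverCard U ≤ G.card := Nat.sInf_le ⟨G, hGU, hGc, rfl⟩
    _ ≤ F'.card := Finset.card_image_le.trans (by rw [Finset.card_attach])
    _ ≤ F.card := Finset.card_filter_le _ _
    _ = coverCard V := hFcard

/-- join of explicit finite subcovers -/
lemma covSet_join {U V : Set (Set X)} {a b : ℕ} (ha : a ∈ covSet U) (hb : b ∈ covSet V) :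
    ∃ c ∈ covSet (joinCov U V), c ≤ a * b := by
  classical
  obtain ⟨F, hFU, hFc, rfl⟩ := ha
  obtain ⟨G, hGV, hGc, rfl⟩ := hb
  refine ⟨(Finset.image₂ (· ∩ ·) F G).card, ⟨_, ?_, ?_, rfl⟩, Finset.card_image₂_le _ _ _⟩
  · intro s hs
    simp only [Finset.coe_image₂, Finset.mem_coe] at hs
    obtain ⟨u, hu, v, hv, rfl⟩ := hs
    exact ⟨u, hFU hu, v, hGV hv, rfl⟩
  · apply Set.eq_univ_of_forall
    intro x
    have h1 : x ∈ ⋃₀ (F : Set (Set X)) := by rw [hFc]; trivial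
    have h2 : x ∈ ⋃₀ (G : Set (Set X)) := by rw [hGc]; trivial
    obtain ⟨u, hu, hxu⟩ := h1
    obtain ⟨v, hv, hxv⟩ := h2
    refine ⟨u ∩ v, ?_, hxu, hxv⟩
    simp only [Finset.coe_image₂, Finset.mem_coe]
    exact Set.mem_image2_of_mem hu hv

lemma hasFin_join {U V : Set (Set X)} (hU : HasFin U) (hV : HasFin V) :
    HasFin (joinCov U V) := by
  obtain ⟨a, ha⟩ := hU
  obtain ⟨b, hb⟩ := hV
  obtain ⟨c, hc, _⟩ := covSet_join ha hb
  exact ⟨c, hc⟩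

lemma coverCard_join_le {U V : Set (Set X)} (hU : HasFin U) (hV : HasFin V) :
    coverCard (joinCov U V) ≤ coverCard U * coverCard V := by
  obtain ⟨c, hc, hle⟩ := covSet_join (coverCard_mem hU) (coverCard_mem hV)
  exact (Nat.sInf_le hc).trans hle

lemma covSet_pull {T : X → X} {U : Set (Set X)} {a : ℕ} (ha : a ∈ covSet U) :
    ∃ c ∈ covSet (pullCov T U), c ≤ a := by
  classical
  obtain ⟨F, hFU, hFc, rfl⟩ := ha
  refine ⟨(F.image (Set.preimage T)).card, ⟨_, ?_, ?_, rfl⟩, Finset.card_image_le⟩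
  · intro s hs
    simp only [Finset.coe_image, Finset.mem_coe] at hs
    obtain ⟨u, hu, rfl⟩ := hs
    exact ⟨u, hFU hu, rfl⟩
  · apply Set.eq_univ_of_forall
    intro x
    have h1 : T x ∈ ⋃₀ (F : Set (Set X)) := by rw [hFc]; trivial
    obtain ⟨u, hu, hxu⟩ := h1
    refine ⟨T ⁻¹' u, ?_, hxu⟩
    simp only [Finset.coe_image, Finset.mem_coe]
    exact ⟨u, hu, rfl⟩

lemma hasFin_pull {T : X → X} {U : Set (Set X)} (hU : HasFin U) : HasFin (pullCov T U) := by
  obtain ⟨a, ha⟩ := hU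
  obtain ⟨c, hc, _⟩ := covSet_pull (T := T) ha
  exact ⟨c, hc⟩

lemma coverCard_pull_le {T : X → X} {U : Set (Set X)} (hU : HasFin U) :
    coverCard (pullCov T U) ≤ coverCard U := by
  obtain ⟨c, hc, hle⟩ := covSet_pull (T := T) (coverCard_mem hU)
  exact (Nat.sInf_le hc).trans hle

end Lemmas

section IterAlg
variable {X : Type*} [TopologicalSpace X]

lemma pullCov_join (f : X → X) (A B : Set (Set X)) :
    pullCov f (joinCov A B) = joinCov (pullCov f A) (pullCov f B) := by
  unfold pullCov joinCov
  exact Set.image_image2_distrib (fun a b => Set.preimage_inter)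

lemma pullCov_pullCov (f g : X → X) (U : Set (Set X)) :
    pullCov f (pullCov g U) = pullCov (g ∘ f) U := by
  unfold pullCov
  rw [Set.image_image]
  rfl

lemma joinCov_assoc (A B C : Set (Set X)) :
    joinCov (joinCov A B) C = joinCov A (joinCov B C) := by
  unfold joinCov
  exact Set.image2_assoc (fun a b c => Set.inter_assoc a b c)

lemma iterJoin_add (T : X → X) (U : Set (Set X)) (p q : ℕ) :
    iterJoin T U (p + q + 1) =
      joinCov (iterJoin T U p) (pullCov (T^[p + 1]) (iterJoin T U q)) := by
  induction q with
  | zero => rfl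
  | succ q ih =>
    have h1 : p + (q + 1) + 1 = (p + q + 1) + 1 := by ring
    rw [h1, show iterJoin T U ((p + q + 1) + 1) =
      joinCov (iterJoin T U (p + q + 1)) (pullCov (T^[(p+q+1) + 1]) U) from rfl, ih,
      joinCov_assoc]
    congr 1
    rw [show iterJoin T U (q+1) = joinCov (iterJoin T U q) (pullCov (T^[q + 1]) U) from rfl,
      pullCov_join, pullCov_pullCov]
    congr 2
    rw [← Function.iterate_add]
    congr 1
    ring

lemma hasFin_iterJoin [CompactSpace X] {T : X → X} (hT : Continuous T) {U : Set (Set X)}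
    (hU : IsOpenCover U) (n : ℕ) : HasFin (iterJoin T U n) :=
  hasFin_of_isOpenCover (isOpenCover_iterJoin hT hU n)

lemma coverCard_iterJoin_mono [CompactSpace X] {T : X → X} (hT : Continuous T)
    {U : Set (Set X)} (hU : IsOpenCover U) {a b : ℕ} (hab : a ≤ b) :
    coverCard (iterJoin T U a) ≤ coverCard (iterJoin T U b) := by
  induction b with
  | zero => simp_all
  | succ b ih =>
    rcases Nat.lt_or_ge a (b+1) with h | h
    · refine le_trans (ih (Nat.lt_succ_iff.mp h)) ?_
      apply coverCard_le_of_refines (hasFin_iterJoin hT hU (b+1))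
      rintro v ⟨e, he, p, hp, rfl⟩ _
      exact ⟨e, he, Set.inter_subset_left⟩
    · have : a = b + 1 := le_antisymm hab h
      subst this
      rfl

end IterAlg

section Subspace
variable {X : Type*} [TopologicalSpace X] {T : X → X} {Y : Set X}

/-- restriction of sets to the subspace -/
def resSet (Y : Set X) (s : Set X) : Set Y := Subtype.val ⁻¹' s

lemma restrict_iterate_val (hM : Set.MapsTo T Y Y) (k : ℕ) (y : Y) :
    (((hM.restrict T Y Y)^[k]) y : X) = T^[k] (y : X) := by
  induction k with
  | zero => rfl
  | succ k ih =>
    rw [Function.iterate_succ_apply', Function.iterate_succ_apply']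
    rw [← ih]
    rfl

lemma resSet_preimage (hM : Set.MapsTo T Y Y) (k : ℕ) (u : Set X) :
    resSet Y (T^[k] ⁻¹' u) = ((hM.restrict T Y Y)^[k]) ⁻¹' (resSet Y u) := by
  ext y
  simp only [resSet, Set.mem_preimage, restrict_iterate_val hM k y]

lemma resSet_inter (a b : Set X) : resSet Y (a ∩ b) = resSet Y a ∩ resSet Y b := rfl

lemma resSet_iterJoin (hM : Set.MapsTo T Y Y) (U : Set (Set X)) (n : ℕ) :
    resSet Y '' (iterJoin T U n) = iterJoin (hM.restrict T Y Y) (resSet Y '' U) n := by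
  induction n with
  | zero => rfl
  | succ n ih =>
    show resSet Y '' (joinCov (iterJoin T U n) (pullCov (T^[n+1]) U)) =
      joinCov (iterJoin (hM.restrict T Y Y) (resSet Y '' U) n)
        (pullCov ((hM.restrict T Y Y)^[n+1]) (resSet Y '' U))
    rw [← ih]
    unfold joinCov
    rw [Set.image_image2_distrib (g₁ := resSet Y) (g₂ := resSet Y)
      (f' := (· ∩ ·)) (fun a b => resSet_inter a b)]
    congr 1
    unfold pullCov
    rw [Set.image_image, Set.image_image]
    exact congrArg _ (Set.image_congr fun u _ => resSet_preimage hM (n+1) u)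

lemma isOpenCover_resSet {U : Set (Set X)} (hU : IsOpenCover U) :
    IsOpenCover (resSet Y '' U) := by
  constructor
  · rintro v ⟨u, hu, rfl⟩
    exact (hU.1 u hu).preimage continuous_subtype_val
  · apply Set.eq_univ_of_forall
    intro y
    have : (y : X) ∈ ⋃₀ U := by rw [hU.2]; trivial
    obtain ⟨u, hu, hyu⟩ := this
    exact ⟨resSet Y u, ⟨u, hu, rfl⟩, hyu⟩

/-- Restricting covers to a subspace can only decrease cover cardinalities. -/
lemma coverCard_res_le (hM : Set.MapsTo T Y Y) {U : Set (Set X)} (n : ℕ)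
    (hU : HasFin (iterJoin T U n)) :
    coverCard (iterJoin (hM.restrict T Y Y) (resSet Y '' U) n) ≤ coverCard (iterJoin T U n) := by
  classical
  obtain ⟨F, hFU, hFc, hFcard⟩ := coverCard_mem hU
  rw [← hFcard]
  have hmem : (F.image (resSet Y)).card ∈
      covSet (iterJoin (hM.restrict T Y Y) (resSet Y '' U) n) := by
    refine ⟨F.image (resSet Y), ?_, ?_, rfl⟩
    · intro s hs
      simp only [Finset.coe_image, Finset.mem_coe] at hs
      obtain ⟨e, he, rfl⟩ := hs
      rw [← resSet_iterJoin hM U n]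
      exact Set.mem_image_of_mem _ (hFU he)
    · apply Set.eq_univ_of_forall
      intro y
      have : (y : X) ∈ ⋃₀ (F : Set (Set X)) := by rw [hFc]; trivial
      obtain ⟨e, he, hye⟩ := this
      refine ⟨resSet Y e, ?_, hye⟩
      simp only [Finset.coe_image, Finset.mem_coe]
      exact Set.mem_image_of_mem _ he
  exact (Nat.sInf_le hmem).trans Finset.card_image_le

end Subspace

section EntMono

lemma log_nat_mono {a b : ℕ} (h : a ≤ b) : Real.log a ≤ Real.log b := by
  rcases Nat.eq_zero_or_pos a with rfl | ha
  · simpa using Real.log_natCast_nonneg b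
  · exact Real.log_le_log (by exact_mod_cast ha) (by exact_mod_cast h)

variable {X₁ X₂ : Type*} [TopologicalSpace X₁] [TopologicalSpace X₂]

lemma topEntOf_le_of_coverCard_le {T₁ : X₁ → X₁} {T₂ : X₂ → X₂}
    {U₁ : Set (Set X₁)} {U₂ : Set (Set X₂)}
    (h : ∀ n, coverCard (iterJoin T₁ U₁ n) ≤ coverCard (iterJoin T₂ U₂ n)) :
    topEntOf T₁ U₁ ≤ topEntOf T₂ U₂ := by
  refine Filter.limsup_le_limsup (Filter.Eventually.of_forall fun n => ?_)
  apply ENNReal.ofReal_le_ofReal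
  apply div_le_div_of_nonneg_right (log_nat_mono (h n))
  positivity

end EntMono

section StepA
variable {X : Type*} [TopologicalSpace X]

lemma mem_iterJoin_of_nonempty {S : X → X} {V W : Set (Set X)} (hW : W ⊆ V ∪ {∅}) :
    ∀ n, ∀ e ∈ iterJoin S W n, e.Nonempty → e ∈ iterJoin S V n := by
  intro n
  induction n with
  | zero =>
    intro e he hne
    rcases hW he with h | h
    · exact h
    · simp only [Set.mem_singleton_iff] at h
      subst h
      exact absurd rfl hne.ne_empty
  | succ n ih =>
    rintro e ⟨a, ha, p, ⟨w, hw, rfl⟩, rfl⟩ hne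
    have hane : a.Nonempty := hne.mono Set.inter_subset_left
    have hpne : (S^[n+1] ⁻¹' w).Nonempty := hne.mono Set.inter_subset_right
    have hwV : w ∈ V := by
      rcases hW hw with h | h
      · exact h
      · simp only [Set.mem_singleton_iff] at h
        subst h
        simp at hpne
    exact ⟨a, ih a ha hane, S^[n+1] ⁻¹' w, ⟨w, hwV, rfl⟩, rfl⟩

/-- Step A: entropy of restriction to a closed invariant subset is at most the entropy. -/
lemma topEntOf_res_le_topEnt [CompactSpace X] {T : X → X} (hT : Continuous T)
    {Y : Set X} (hYc : IsClosed Y) (hM : Set.MapsTo T Y Y)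
    {V : Set (Set Y)} (hV : IsOpenCover V) :
    topEntOf (hM.restrict T Y Y) V ≤ topEnt T := by
  classical
  haveI : CompactSpace Y := isCompact_iff_compactSpace.mp hYc.isCompact
  have hS : Continuous (hM.restrict T Y Y) := hT.restrict hM
  -- choose open extensions
  have hext : ∀ v ∈ V, ∃ w : Set X, IsOpen w ∧ resSet Y w = v := by
    intro v hv
    obtain ⟨w, hw, hwv⟩ := isOpen_induced_iff.mp (hV.1 v hv)
    exact ⟨w, hw, hwv⟩
  choose g hg1 hg2 using hext
  set U : Set (Set X) := {s | ∃ v, ∃ h : v ∈ V, s = g v h} ∪ {Yᶜ} with hU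
  have hUoc : IsOpenCover U := by
    constructor
    · rintro u (⟨v, hv, rfl⟩ | hu)
      · exact hg1 v hv
      · simp only [Set.mem_singleton_iff] at hu
        subst hu
        exact hYc.isOpen_compl
    · apply Set.eq_univ_of_forall
      intro x
      by_cases hx : x ∈ Y
      · have : (⟨x, hx⟩ : Y) ∈ ⋃₀ V := by rw [hV.2]; trivial
        obtain ⟨v, hv, hxv⟩ := this
        refine ⟨g v hv, Or.inl ⟨v, hv, rfl⟩, ?_⟩
        have := hg2 v hv
        rw [← this] at hxv
        exact hxv
      · exact ⟨Yᶜ, Or.inr rfl, hx⟩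
  have hres : resSet Y '' U ⊆ V ∪ {∅} := by
    rintro s ⟨u, (⟨v, hv, rfl⟩ | hu), rfl⟩
    · rw [hg2 v hv]; exact Or.inl hv
    · simp only [Set.mem_singleton_iff] at hu
      subst hu
      right
      simp only [Set.mem_singleton_iff, resSet]
      ext y
      simp [Set.mem_preimage]
  have key : ∀ n, coverCard (iterJoin (hM.restrict T Y Y) V n) ≤
      coverCard (iterJoin T U n) := by
    intro n
    refine le_trans ?_ (coverCard_res_le hM n (hasFin_iterJoin hT hUoc n))
    apply coverCard_le_of_refines
    · exact hasFin_iterJoin hS (isOpenCover_resSet hUoc) n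
    · intro e he hne
      exact ⟨e, mem_iterJoin_of_nonempty hres n e he hne, le_refl e⟩
  refine le_trans (topEntOf_le_of_coverCard_le key) ?_
  exact le_iSup₂ (f := fun U (_ : IsOpenCover U) => topEntOf T U) U hUoc

end StepA

section StepB
variable {X : Type*} [TopologicalSpace X]

lemma range_iterate_antitone (T : X → X) {a b : ℕ} (hab : a ≤ b) :
    Set.range T^[b] ⊆ Set.range T^[a] := by
  obtain ⟨k, rfl⟩ := Nat.exists_eq_add_of_le hab
  rw [Function.iterate_add]
  exact Set.range_comp_subset_range _ _

lemma exists_range_subset [CompactSpace X] [T2Space X] {T : X → X} (hT : Continuous T)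
    {W : Set X} (hW : IsOpen W) (hYW : (⋂ n : ℕ, Set.range T^[n]) ⊆ W) :
    ∃ m' : ℕ, Set.range T^[m' + 1] ⊆ W := by
  have hcl : ∀ n : ℕ, IsClosed (Set.range T^[n]) :=
    fun n => (isCompact_range (hT.iterate n)).isClosed
  have hcov : Wᶜ ⊆ ⋃ n : ℕ, (Set.range T^[n])ᶜ := by
    intro x hx
    by_contra hxx
    simp only [Set.mem_iUnion, Set.mem_compl_iff, not_exists, not_not] at hxx
    exact hx (hYW (Set.mem_iInter.mpr hxx))
  obtain ⟨s, hs⟩ := (hW.isClosed_compl.isCompact).elim_finite_subcover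
    (fun n : ℕ => (Set.range T^[n])ᶜ) (fun n => (hcl n).isOpen_compl) hcov
  refine ⟨s.sup id, ?_⟩
  intro x hx
  by_contra hxW
  have := hs hxW
  simp only [Set.mem_iUnion, Set.mem_compl_iff] at this
  obtain ⟨n, hns, hxn⟩ := this
  exact hxn (range_iterate_antitone T (le_trans (Finset.le_sup (f := id) hns)
    (Nat.le_succ _)) hx)

end StepB

section StepBMain
variable {X : Type*} [TopologicalSpace X]

lemma stepB_bound [CompactSpace X] [T2Space X] {T : X → X} (hT : Continuous T)
    {Y : Set X} (hYeq : Y = ⋂ n : ℕ, Set.range T^[n]) (hYne : Y.Nonempty)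
    (hM : Set.MapsTo T Y Y) {U : Set (Set X)} (hU : IsOpenCover U) (n : ℕ) :
    topEntOf T U ≤ ENNReal.ofReal
      (Real.log (coverCard (iterJoin (hM.restrict T Y Y) (resSet Y '' U) n)) / (n + 1)) := by
  classical
  haveI : Nonempty X := ⟨hYne.choose⟩
  haveI : Nonempty Y := ⟨⟨hYne.choose, hYne.choose_spec⟩⟩
  have hYc : IsClosed Y := by
    rw [hYeq]
    exact isClosed_iInter fun k => (isCompact_range (hT.iterate k)).isClosed
  haveI : CompactSpace Y := isCompact_iff_compactSpace.mp hYc.isCompact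
  have hS : Continuous (hM.restrict T Y Y) := hT.restrict hM
  have hVoc : IsOpenCover (resSet Y '' U) := isOpenCover_resSet hU
  set c := coverCard (iterJoin (hM.restrict T Y Y) (resSet Y '' U) n) with hc
  have hcfin := hasFin_iterJoin hS hVoc n
  have hc1 : 1 ≤ c := one_le_coverCard hcfin
  obtain ⟨G, hG1, hG2, hG3⟩ := coverCard_mem hcfin
  -- extend each element of G to an element of iterJoin T U n
  have hGe : ∀ g ∈ G, ∃ ee ∈ iterJoin T U n, resSet Y ee = g := by
    intro g hg
    have : g ∈ resSet Y '' iterJoin T U n := by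
      rw [resSet_iterJoin hM U n]
      exact hG1 hg
    obtain ⟨ee, hee, heeg⟩ := this
    exact ⟨ee, hee, heeg⟩
  choose e he1 he2 using hGe
  set W : Set X := ⋃ (g : Set Y) (h : g ∈ G), e g h with hW
  have hWo : IsOpen W :=
    isOpen_iUnion fun g => isOpen_iUnion fun h =>
      (isOpenCover_iterJoin hT hU n).1 _ (he1 g h)
  have hYW : Y ⊆ W := by
    intro y hy
    have : (⟨y, hy⟩ : Y) ∈ ⋃₀ (G : Set (Set Y)) := by rw [hG2]; trivial
    obtain ⟨g, hg, hyg⟩ := this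
    have : (⟨y, hy⟩ : Y) ∈ resSet Y (e g hg) := by rw [he2 g hg]; exact hyg
    exact Set.mem_iUnion.mpr ⟨g, Set.mem_iUnion.mpr ⟨hg, this⟩⟩
  obtain ⟨m', hm'⟩ := exists_range_subset hT hWo (hYeq ▸ hYW)
  -- finite subcovers of the pulled-back restricted cover
  have hQ : ∀ M : ℕ, m' + 1 ≤ M →
      ∃ d ∈ covSet (pullCov (T^[M]) (iterJoin T U n)), d ≤ c := by
    intro M hM'
    refine ⟨(G.attach.image (fun g => T^[M] ⁻¹' (e g.1 g.2))).card, ⟨_, ?_, ?_, rfl⟩, ?_⟩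
    · intro s hs
      simp only [Finset.coe_image, Finset.mem_coe, Set.mem_image] at hs
      obtain ⟨g, _, rfl⟩ := hs
      exact ⟨e g.1 g.2, he1 g.1 g.2, rfl⟩
    · apply Set.eq_univ_of_forall
      intro x
      have hx : T^[M] x ∈ W := hm' (range_iterate_antitone T hM' ⟨x, rfl⟩)
      rw [hW] at hx
      simp only [Set.mem_iUnion] at hx
      obtain ⟨g, hg, hxg⟩ := hx
      refine ⟨T^[M] ⁻¹' (e g hg), ?_, hxg⟩
      simp only [Finset.coe_image, Finset.mem_coe, Set.mem_image]
      exact ⟨⟨g, hg⟩, Finset.mem_attach _ _, rfl⟩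
    · calc (G.attach.image (fun g => T^[M] ⁻¹' (e g.1 g.2))).card
          ≤ G.attach.card := Finset.card_image_le
        _ = G.card := Finset.card_attach
        _ = c := hG3
  set A := coverCard (iterJoin T U m') with hA
  have hAfin := hasFin_iterJoin hT hU m'
  have hA1 : 1 ≤ A := one_le_coverCard hAfin
  -- the main combinatorial claim
  have claim : ∀ j : ℕ, ∃ d ∈ covSet (iterJoin T U (m' + (j+1)*(n+1))), d ≤ A * c^(j+1) := by
    intro j
    induction j with
    | zero =>
      obtain ⟨dq, hdq, hdqle⟩ := hQ (m'+1) le_rfl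
      obtain ⟨d, hd, hdle⟩ := covSet_join (coverCard_mem hAfin) hdq
      refine ⟨d, ?_, ?_⟩
      · have harith : m' + 1*(n+1) = m' + n + 1 := by ring
        rw [harith, iterJoin_add T U m' n]
        exact hd
      · calc d ≤ A * dq := hdle
          _ ≤ A * c^1 := by
            simp only [pow_one]
            exact Nat.mul_le_mul_left A hdqle
    | succ j ih =>
      obtain ⟨dj, hdj, hdjle⟩ := ih
      obtain ⟨dq, hdq, hdqle⟩ := hQ (m' + (j+1)*(n+1) + 1) (by omega)
      obtain ⟨d, hd, hdle⟩ := covSet_join hdj hdq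
      refine ⟨d, ?_, ?_⟩
      · have harith : m' + (j+2)*(n+1) = (m' + (j+1)*(n+1)) + n + 1 := by ring
        rw [harith, iterJoin_add T U (m' + (j+1)*(n+1)) n]
        exact hd
      · calc d ≤ dj * dq := hdle
          _ ≤ (A * c^(j+1)) * c := Nat.mul_le_mul hdjle hdqle
          _ = A * c^(j+2) := by ring
  -- per-N bound on coverCard
  have perN : ∀ N : ℕ, coverCard (iterJoin T U N) ≤ A * c^(N/(n+1) + 1) := by
    intro N
    set j := N / (n+1) with hj
    obtain ⟨d, hd, hdle⟩ := claim j
    have hNle : N ≤ m' + (j+1)*(n+1) := by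
      have h1 : N < (j+1) * (n+1) := by
        rw [hj]
        exact (Nat.div_lt_iff_lt_mul (by omega)).mp (Nat.lt_succ_self _)
      omega
    calc coverCard (iterJoin T U N) ≤ coverCard (iterJoin T U (m' + (j+1)*(n+1))) :=
          coverCard_iterJoin_mono hT hU hNle
      _ ≤ d := Nat.sInf_le hd
      _ ≤ A * c^(j+1) := hdle
  -- real-number estimate
  set B : ℝ := Real.log c / (n+1) with hB
  set C : ℝ := Real.log A + n * Real.log c with hC
  have hlogc : (0:ℝ) ≤ Real.log c := Real.log_natCast_nonneg c
  have hlogA : (0:ℝ) ≤ Real.log A := Real.log_natCast_nonneg A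
  have key : ∀ N : ℕ, Real.log (coverCard (iterJoin T U N)) / (N+1) ≤ B + C/(N+1) := by
    intro N
    set j := N / (n+1) with hj
    have hNpos : (0:ℝ) < (N:ℝ)+1 := by positivity
    have hnpos : (0:ℝ) < (n:ℝ)+1 := by positivity
    have hA0 : ((A:ℝ)) ≠ 0 := Nat.cast_ne_zero.mpr (by omega)
    have hcpos : (0:ℝ) < (c:ℝ) := by exact_mod_cast hc1
    have hlog1 : Real.log (coverCard (iterJoin T U N)) ≤
        Real.log A + ((j:ℝ)+1) * Real.log c := by
      refine le_trans (log_nat_mono (perN N)) ?_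
      have hcast : ((A * c^(j+1) : ℕ) : ℝ) = (A:ℝ) * (c:ℝ)^(j+1) := by push_cast; ring
      rw [hcast, Real.log_mul hA0 (by positivity), Real.log_pow]
      push_cast
      linarith
    have hjN : (j:ℝ) * ((n:ℝ)+1) ≤ (N:ℝ) := by
      have := Nat.div_mul_le_self N (n+1)
      exact_mod_cast this
    have hnum : Real.log A + ((j:ℝ)+1) * Real.log c ≤ B * ((N:ℝ)+1) + C := by
      have hBval : B * ((N:ℝ)+1) = Real.log c * (((N:ℝ)+1)/((n:ℝ)+1)) := by
        rw [hB]; ring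
      have hfrac : ((j:ℝ)+1) - (n:ℝ) ≤ ((N:ℝ)+1)/((n:ℝ)+1) := by
        rw [le_div_iff₀ hnpos]
        nlinarith [hjN, Nat.cast_nonneg (α := ℝ) n]
      nlinarith [mul_le_mul_of_nonneg_right hfrac hlogc]
    calc Real.log (coverCard (iterJoin T U N)) / ((N:ℝ)+1)
        ≤ (Real.log A + ((j:ℝ)+1) * Real.log c) / ((N:ℝ)+1) :=
          div_le_div_of_nonneg_right hlog1 (le_of_lt hNpos) |>.trans_eq rfl
      _ ≤ (B * ((N:ℝ)+1) + C) / ((N:ℝ)+1) :=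
          div_le_div_of_nonneg_right hnum (le_of_lt hNpos) |>.trans_eq rfl
      _ = B + C/((N:ℝ)+1) := by field_simp
  -- pass to the limsup
  have hmono : ∀ N : ℕ, ENNReal.ofReal (Real.log (coverCard (iterJoin T U N)) / (N+1)) ≤
      ENNReal.ofReal (B + C/((N:ℝ)+1)) :=
    fun N => ENNReal.ofReal_le_ofReal (key N)
  have htendR : Filter.Tendsto (fun N : ℕ => B + C/((N:ℝ)+1)) Filter.atTop (nhds B) := by
    have h0 : Filter.Tendsto (fun N : ℕ => C/((N:ℝ)+1)) Filter.atTop (nhds 0) := by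
      have h1 := (tendsto_const_div_atTop_nhds_zero_nat C).comp (Filter.tendsto_add_atTop_nat 1)
      have h2 : (fun N : ℕ => C/((N:ℝ)+1)) = (fun k : ℕ => C / (k:ℝ)) ∘ fun a => a + 1 := by
        funext N
        simp only [Function.comp_apply]
        push_cast
        ring
      rw [h2]
      exact h1
    simpa using (tendsto_const_nhds (x := B) (f := Filter.atTop (α := ℕ))).add h0
  have htend : Filter.Tendsto (fun N : ℕ => ENNReal.ofReal (B + C/((N:ℝ)+1)))
      Filter.atTop (nhds (ENNReal.ofReal B)) :=
    (ENNReal.continuous_ofReal.tendsto B).comp htendR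
  calc topEntOf T U
      ≤ Filter.atTop.limsup (fun N : ℕ => ENNReal.ofReal (B + C/((N:ℝ)+1))) :=
        Filter.limsup_le_limsup (Filter.Eventually.of_forall hmono)
    _ = ENNReal.ofReal B := htend.limsup_eq

end StepBMain

section Final
variable {X : Type*} [TopologicalSpace X]

lemma topEnt_eq_restrict [CompactSpace X] [T2Space X] {T : X → X} (hT : Continuous T)
    {Y : Set X} (hYeq : Y = ⋂ n : ℕ, Set.range T^[n]) (hYne : Y.Nonempty)
    (hM : Set.MapsTo T Y Y) :
    topEnt T = topEnt (hM.restrict T Y Y) := by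
  have hYc : IsClosed Y := by
    rw [hYeq]
    exact isClosed_iInter fun k => (isCompact_range (hT.iterate k)).isClosed
  apply le_antisymm
  · refine iSup₂_le fun U hU => ?_
    have h1 : topEntOf T U ≤ topEntOf (hM.restrict T Y Y) (resSet Y '' U) := by
      refine Filter.le_limsup_of_frequently_le (Filter.Eventually.of_forall ?_).frequently
      exact fun n => stepB_bound hT hYeq hYne hM hU n
    exact h1.trans (le_iSup₂
      (f := fun V (_ : IsOpenCover V) => topEntOf (hM.restrict T Y Y) V) _
      (isOpenCover_resSet hU))
  · exact iSup₂_le fun V hV => topEntOf_res_le_topEnt hT hYc hM hV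

end Final

/-- For a continuous endomorphism `ψ` of a compact Hausdorff topological group `K`:
`ψ(Im_∞ψ) = Im_∞ψ`, `Im_∞ψ` is the largest closed `ψ`-invariant subgroup `N` of `K` with
`ψ(N) = N`, and `h_top(ψ) = h_top(ψ↾_{Im_∞ψ})`. -/
theorem stmt19 {K : Type*} [Group K] [TopologicalSpace K] [IsTopologicalGroup K]
    [CompactSpace K] [T2Space K] (ψ : K →* K) (hc : Continuous ψ) :
    ⇑ψ '' hyperIm ψ = hyperIm ψ ∧
    (∃ N : Subgroup K, (N : Set K) = hyperIm ψ ∧ IsClosed (N : Set K)) ∧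
    (∀ N : Subgroup K, IsClosed (N : Set K) → ⇑ψ '' (N : Set K) = (N : Set K) →
      (N : Set K) ⊆ hyperIm ψ) ∧
    (∀ h : Set.MapsTo ψ (hyperIm ψ) (hyperIm ψ),
      topEnt ⇑ψ = topEnt (h.restrict ψ (hyperIm ψ) (hyperIm ψ))) := by
  have hrange_cl : ∀ n : ℕ, IsClosed (Set.range (⇑ψ)^[n]) :=
    fun n => (isCompact_range (hc.iterate n)).isClosed
  have hanti : ∀ {a b : ℕ}, a ≤ b → Set.range (⇑ψ)^[b] ⊆ Set.range (⇑ψ)^[a] :=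
    fun h => range_iterate_antitone ψ h
  have hone : (1 : K) ∈ hyperIm ψ :=
    Set.mem_iInter.mpr fun n => ⟨1, iterate_map_one ψ n⟩
  have hYne : (hyperIm ψ).Nonempty := ⟨1, hone⟩
  have himg : ⇑ψ '' hyperIm ψ = hyperIm ψ := by
    apply le_antisymm
    · rintro x ⟨y, hy, rfl⟩
      apply Set.mem_iInter.mpr
      intro n
      have : y ∈ Set.range (⇑ψ)^[n] := Set.mem_iInter.mp hy n
      obtain ⟨z, rfl⟩ := this
      refine ⟨ψ z, ?_⟩
      rw [← Function.iterate_succ_apply (⇑ψ) n z, Function.iterate_succ_apply' (⇑ψ) n z]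
    · intro x hx
      -- use compactness of the fibers
      set C : ℕ → Set K := fun n => (⇑ψ) ⁻¹' {x} ∩ Set.range (⇑ψ)^[n] with hC
      have hCcl : ∀ n, IsClosed (C n) :=
        fun n => (IsClosed.preimage hc isClosed_singleton).inter (hrange_cl n)
      have hCanti : ∀ n, C (n+1) ⊆ C n :=
        fun n => Set.inter_subset_inter_right _ (hanti (Nat.le_succ n))
      have hCne : ∀ n, (C n).Nonempty := by
        intro n
        have : x ∈ Set.range (⇑ψ)^[n+1] := Set.mem_iInter.mp hx (n+1)
        obtain ⟨z, hz⟩ := this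
        refine ⟨(⇑ψ)^[n] z, ?_, ⟨z, rfl⟩⟩
        simp only [Set.mem_preimage, Set.mem_singleton_iff]
        rw [← Function.iterate_succ_apply' (⇑ψ) n z]
        exact hz
      have hCcomp : IsCompact (C 0) := (hCcl 0).isCompact
      obtain ⟨y, hy⟩ := IsCompact.nonempty_iInter_of_sequence_nonempty_isCompact_isClosed
        C hCanti hCne hCcomp hCcl
      have hy' : ∀ n, y ∈ C n := Set.mem_iInter.mp hy
      refine ⟨y, Set.mem_iInter.mpr fun n => (hy' n).2, ?_⟩
      have := (hy' 0).1
      simpa using this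
  refine ⟨himg, ?_, ?_, ?_⟩
  · refine ⟨{ carrier := hyperIm ψ
              mul_mem' := ?_
              one_mem' := hone
              inv_mem' := ?_ }, rfl, ?_⟩
    · intro a b ha hb
      apply Set.mem_iInter.mpr
      intro n
      obtain ⟨za, hza⟩ := Set.mem_iInter.mp ha n
      obtain ⟨zb, hzb⟩ := Set.mem_iInter.mp hb n
      exact ⟨za * zb, by rw [iterate_map_mul, hza, hzb]⟩
    · intro a ha
      apply Set.mem_iInter.mpr
      intro n
      obtain ⟨za, hza⟩ := Set.mem_iInter.mp ha n
      exact ⟨za⁻¹, by rw [iterate_map_inv, hza]⟩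
    · exact isClosed_iInter hrange_cl
  · intro N _ hNinv
    have key : ∀ n : ℕ, (N : Set K) ⊆ (⇑ψ)^[n] '' (N : Set K) := by
      intro n
      induction n with
      | zero => simp
      | succ n ih =>
        intro x hx
        obtain ⟨y, hy, rfl⟩ := ih hx
        rw [← hNinv] at hy
        obtain ⟨z, hz, rfl⟩ := hy
        exact ⟨z, hz, by rw [← Function.iterate_succ_apply (⇑ψ) n z]⟩
    intro x hx
    apply Set.mem_iInter.mpr
    intro n
    obtain ⟨y, _, rfl⟩ := key n hx
    exact ⟨y, rfl⟩
  · intro h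
    exact topEnt_eq_restrict hc rfl hYne h
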